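/- arXiv:0801.2274 — 4 statements merged into one kernel-verified Lean document; each statement's English description precedes it below -/
import Mathlib

section
/- Let Φ be the root system of a complex simple Lie algebra with simple roots Δ, and fix a subset Δ₁ ⊂ Δ. For a multi-index (k₁,…,k_l) > 0, let Φ_{k₁,…,k_l} denote the set of roots whose coefficient at the i-th marked simple root of Δ₁ equals k_i. If α, β ∈ Φ_{k₁,…,k_l}, then there exist simple roots α_{i_1}, …, α_{i_s} ∈ Δ∖Δ₁ and signs ε_1,…,ε_s ∈ {1,−1} with β = α + ε_1 α_{i_1} + ⋯ + ε_s α_{i_s} such that every partial sum α + ε_1 α_{i_1} + ⋯ + ε_t α_{i_t} lies in Φ_{k₁,…,k_l}. -/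
open scoped RealInnerProductSpace

/-- A reduced, crystallographic, irreducible root system in a real inner product space
(the root system of a complex simple Lie algebra). -/
structure IsRootSystem {V : Type*} [NormedAddCommGroup V] [InnerProductSpace ℝ V]
    (Φ : Set V) : Prop where
  finite : Φ.Finite
  nonempty : Φ.Nonempty
  ne_zero : ∀ α ∈ Φ, α ≠ 0
  neg_mem : ∀ α ∈ Φ, -α ∈ Φ
  reflect_mem : ∀ α ∈ Φ, ∀ β ∈ Φ, β - (2 * ⟪β, α⟫ / ⟪α, α⟫) • α ∈ Φ
  crystallographic : ∀ α ∈ Φ, ∀ β ∈ Φ, ∃ n : ℤ, 2 * ⟪β, α⟫ / ⟪α, α⟫ = (n : ℝ)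
  reduced : ∀ α ∈ Φ, ∀ t : ℝ, t • α ∈ Φ → t = 1 ∨ t = -1
  irreducible : ∀ Φ₁ Φ₂ : Set V, Φ₁ ∪ Φ₂ = Φ →
    (∀ a ∈ Φ₁, ∀ c ∈ Φ₂, ⟪a, c⟫ = 0) → Φ₁ = ∅ ∨ Φ₂ = ∅

/-- A base (system of simple roots) for the root system `Φ`. -/
structure IsBase {V : Type*} [NormedAddCommGroup V] [InnerProductSpace ℝ V]
    (Φ : Set V) {ι : Type*} [Fintype ι] (b : ι → V) : Prop where
  mem : ∀ i, b i ∈ Φ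
  indep : LinearIndependent ℝ b
  coords : ∀ α ∈ Φ, ∃ c : ι → ℤ, α = ∑ i, (c i : ℝ) • b i ∧
    ((∀ i, 0 ≤ c i) ∨ (∀ i, c i ≤ 0))

/-- Key lemma: if `α, β` are roots with `⟪α, β⟫ > 0` and `α ≠ β`, then `α - β` is a root. -/
lemma sub_mem_of_inner_pos {V : Type*} [NormedAddCommGroup V] [InnerProductSpace ℝ V]
    {Φ : Set V} (hΦ : IsRootSystem Φ) {α β : V}
    (hα : α ∈ Φ) (hβ : β ∈ Φ) (hpos : 0 < ⟪α, β⟫) (hne : α ≠ β) : α - β ∈ Φ := by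
  have hα0 : α ≠ 0 := hΦ.ne_zero α hα
  have hβ0 : β ≠ 0 := hΦ.ne_zero β hβ
  have hAA : 0 < ⟪α, α⟫ := by
    rw [real_inner_self_eq_norm_sq]; exact pow_pos (norm_pos_iff.mpr hα0) 2
  have hBB : 0 < ⟪β, β⟫ := by
    rw [real_inner_self_eq_norm_sq]; exact pow_pos (norm_pos_iff.mpr hβ0) 2
  obtain ⟨m, hm⟩ := hΦ.crystallographic β hβ α hα
  obtain ⟨n, hn⟩ := hΦ.crystallographic α hα β hβ
  have hcomm : ⟪β, α⟫ = ⟪α, β⟫ := real_inner_comm α β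
  have hm1 : 1 ≤ m := by
    have : (0:ℝ) < (m:ℝ) := by rw [← hm]; positivity
    exact_mod_cast Int.cast_pos.mp (by exact_mod_cast this)
  have hn1 : 1 ≤ n := by
    have : (0:ℝ) < (n:ℝ) := by rw [← hn, hcomm]; positivity
    exact_mod_cast Int.cast_pos.mp (by exact_mod_cast this)
  rcases eq_or_lt_of_le hm1 with hm2 | hm2
  · have := hΦ.reflect_mem β hβ α hα
    rw [hm, ← hm2] at this
    simpa using this
  rcases eq_or_lt_of_le hn1 with hn2 | hn2
  · have := hΦ.reflect_mem α hα β hβ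
    rw [hn, ← hn2] at this
    simp only [Int.cast_one, one_smul] at this
    have := hΦ.neg_mem _ this
    rwa [neg_sub] at this
  exfalso
  have hmn : (4:ℝ) ≤ (m:ℝ) * (n:ℝ) := by
    have h4 : (4:ℤ) ≤ m * n := by nlinarith [hm2, hn2]
    exact_mod_cast h4
  have hmn' : (m:ℝ) * (n:ℝ) = 4 * ⟪α,β⟫^2 / (⟪α,α⟫ * ⟪β,β⟫) := by
    rw [← hm, ← hn, hcomm]; field_simp; ring
  have hsq : ⟪α,α⟫ * ⟪β,β⟫ ≤ ⟪α,β⟫^2 := by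
    rw [hmn', le_div_iff₀ (by positivity)] at hmn
    nlinarith [mul_pos hAA hBB]
  have hcs : ⟪α,β⟫ ≤ ‖α‖ * ‖β‖ := real_inner_le_norm α β
  have hnorm : ⟪α,α⟫ = ‖α‖^2 := real_inner_self_eq_norm_sq α
  have hnormb : ⟪β,β⟫ = ‖β‖^2 := real_inner_self_eq_norm_sq β
  have heq : ⟪α,β⟫ = ‖α‖ * ‖β‖ := by nlinarith [norm_nonneg α, norm_nonneg β]
  have hray : ‖β‖ • α = ‖α‖ • β := (inner_eq_norm_mul_iff_real).mp heq
  have hna : (0:ℝ) < ‖α‖ := norm_pos_iff.mpr hα0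
  have hnb : (0:ℝ) < ‖β‖ := norm_pos_iff.mpr hβ0
  have hβeq : β = (‖β‖ / ‖α‖) • α := by
    have : ‖α‖⁻¹ • (‖α‖ • β) = ‖α‖⁻¹ • (‖β‖ • α) := by rw [hray]
    rw [smul_smul, smul_smul, inv_mul_cancel₀ (ne_of_gt hna), one_smul] at this
    rw [div_eq_inv_mul]; exact this
  rcases hΦ.reduced α hα (‖β‖ / ‖α‖) (hβeq ▸ hβ) with h1 | h1
  · rw [h1, one_smul] at hβeq; exact hne hβeq.symm
  · have h2 : (0:ℝ) < ‖β‖ / ‖α‖ := by positivity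
    rw [h1] at h2; linarith

/-- if `α, β ∈ Φ_{k₁,…,k_l}` (same positive multidegree `k` at the marked simple
roots `Δ₁`), then `β` is obtained from `α` by successively adding and subtracting simple roots
not in `Δ₁`, with every partial sum a root in `Φ_{k₁,…,k_l}`. -/
theorem stmt1 {V : Type*} [NormedAddCommGroup V] [InnerProductSpace ℝ V]
    {ι : Type*} [Fintype ι] (Φ : Set V) (b : ι → V)
    (hΦ : IsRootSystem Φ) (hb : IsBase Φ b)
    (Δ₁ : Set ι) (k : ι → ℤ)
    (c : V → ι → ℤ) (hc : ∀ γ ∈ Φ, γ = ∑ i, (c γ i : ℝ) • b i)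
    (hkpos : ∃ i ∈ Δ₁, 0 < k i) (hknn : ∀ i ∈ Δ₁, 0 ≤ k i)
    (α β : V) (hα : α ∈ Φ) (hβ : β ∈ Φ)
    (hαk : ∀ i ∈ Δ₁, c α i = k i) (hβk : ∀ i ∈ Δ₁, c β i = k i) :
    ∃ l : List V, (∀ x ∈ l, ∃ i ∉ Δ₁, x = b i ∨ x = -(b i)) ∧ β = α + l.sum ∧
      ∀ t : ℕ, t ≤ l.length →
        α + (l.take t).sum ∈ Φ ∧ ∀ i ∈ Δ₁, c (α + (l.take t).sum) i = k i := by
  classical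
  obtain ⟨j₀, hj₀, hk₀⟩ := hkpos
  -- uniqueness of real coordinates
  have huniq : ∀ f g : ι → ℝ, ∑ i, f i • b i = ∑ i, g i • b i → ∀ j, f j = g j := by
    intro f g h j
    have h0 : ∑ i, (f i - g i) • b i = 0 := by
      simp only [sub_smul, Finset.sum_sub_distrib, h, sub_self]
    have := (Fintype.linearIndependent_iff.mp hb.indep) (fun i => f i - g i) h0 j
    linarith
  -- coefficient change under adding a multiple of a simple root
  have hstep : ∀ γ₁ ∈ Φ, ∀ γ₂ ∈ Φ, ∀ (i' : ι) (ε : ℤ), γ₂ = γ₁ + (ε:ℝ) • b i' →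
      ∀ j, c γ₂ j = c γ₁ j + (if j = i' then ε else 0) := by
    intro γ₁ h1 γ₂ h2 i' ε heq j
    have key : ∑ p, (c γ₂ p : ℝ) • b p
        = ∑ p, ((c γ₁ p : ℝ) + (if p = i' then (ε:ℝ) else 0)) • b p := by
      rw [← hc γ₂ h2, heq]
      simp only [add_smul, Finset.sum_add_distrib, ite_smul, zero_smul,
        Finset.sum_ite_eq', Finset.mem_univ, if_true]
      rw [← hc γ₁ h1]
    have hj := huniq _ _ key j
    by_cases hji : j = i' <;> simp only [hji, if_true, if_false, add_zero] at hj ⊢ <;>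
      exact_mod_cast hj
  -- a marked root cannot be `± b i'` for `i' ∉ Δ₁`
  have hnepm : ∀ γ' ∈ Φ, (∀ j ∈ Δ₁, c γ' j = k j) → ∀ i' ∉ Δ₁, ∀ ε : ℤ,
      γ' ≠ (ε:ℝ) • b i' := by
    intro γ' hγ' hγ'k i' hi' ε heq
    have h1 : ∑ p, (c γ' p : ℝ) • b p = ∑ p, (if p = i' then (ε:ℝ) else 0) • b p := by
      rw [← hc γ' hγ', heq]
      simp [ite_smul, Finset.sum_ite_eq']
    have h2 := huniq _ _ h1 j₀
    have hj0 : j₀ ≠ i' := fun h => hi' (h ▸ hj₀)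
    rw [if_neg hj0] at h2
    have h3 : c γ' j₀ = 0 := by exact_mod_cast h2
    rw [hγ'k j₀ hj₀] at h3; omega
  -- main induction on the ℓ¹-distance between coefficient vectors
  suffices H : ∀ N : ℕ, ∀ α β : V, α ∈ Φ → β ∈ Φ →
      (∀ i ∈ Δ₁, c α i = k i) → (∀ i ∈ Δ₁, c β i = k i) →
      (∑ i, (c β i - c α i).natAbs) = N →
      ∃ l : List V, (∀ x ∈ l, ∃ i ∉ Δ₁, x = b i ∨ x = -(b i)) ∧ β = α + l.sum ∧
        ∀ t : ℕ, t ≤ l.length →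
          α + (l.take t).sum ∈ Φ ∧ ∀ i ∈ Δ₁, c (α + (l.take t).sum) i = k i by
    exact H _ α β hα hβ hαk hβk rfl
  clear hα hβ hαk hβk α β
  intro N
  induction N using Nat.strong_induction_on with
  | _ N IH =>
    intro α β hα hβ hαk hβk hN
    by_cases hab : ∀ j, c β j = c α j
    · -- base case: β = α
      have hba : β = α := by
        rw [hc β hβ, hc α hα]
        exact Finset.sum_congr rfl fun p _ => by rw [hab p]
      refine ⟨[], by simp, by simp [hba], ?_⟩
      intro t ht
      simp only [List.length_nil, Nat.le_zero] at ht
      subst ht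
      simpa using ⟨hα, hαk⟩
    · push_neg at hab
      obtain ⟨j₁, hj₁⟩ := hab
      set γ := β - α with hγdef
      have hγ0 : γ ≠ 0 := by
        intro h
        have hba : β = α := by rwa [hγdef, sub_eq_zero] at h
        have := huniq (fun p => (c β p : ℝ)) (fun p => (c α p : ℝ))
          (by rw [← hc β hβ, ← hc α hα, hba]) j₁
        exact hj₁ (by exact_mod_cast this)
      have hγγ : 0 < ⟪γ, γ⟫ := by
        rw [real_inner_self_eq_norm_sq]; exact pow_pos (norm_pos_iff.mpr hγ0) 2
      have hγexp : γ = ∑ p, ((c β p - c α p : ℤ) : ℝ) • b p := by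
        rw [hγdef]
        nth_rewrite 1 [hc β hβ, hc α hα]
        rw [← Finset.sum_sub_distrib]
        exact Finset.sum_congr rfl fun p _ => by push_cast; rw [sub_smul]
      have hexpand : ⟪γ, γ⟫ = ∑ p, ((c β p - c α p : ℤ) : ℝ) * ⟪γ, b p⟫ := by
        calc ⟪γ, γ⟫ = ⟪γ, ∑ p, ((c β p - c α p : ℤ) : ℝ) • b p⟫ := by rw [← hγexp]
          _ = ∑ p, ((c β p - c α p : ℤ) : ℝ) * ⟪γ, b p⟫ := by
              rw [inner_sum]
              exact Finset.sum_congr rfl fun p _ => real_inner_smul_right _ _ _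
      obtain ⟨i, hiPos⟩ : ∃ p, 0 < ((c β p - c α p : ℤ) : ℝ) * ⟪γ, b p⟫ := by
        by_contra hcon
        push_neg at hcon
        have h1 : ⟪γ, γ⟫ ≤ 0 := hexpand ▸ Finset.sum_nonpos fun p _ => hcon p
        linarith
      have hd0 : c β i - c α i ≠ 0 := by
        intro h; rw [h] at hiPos; simp at hiPos
      have hiΔ : i ∉ Δ₁ := fun h => hd0 (by rw [hβk i h, hαk i h, sub_self])
      -- choose the sign ε
      obtain ⟨ε, hε1, hsign, hγbi⟩ : ∃ ε : ℤ, (ε = 1 ∨ ε = -1) ∧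
          ((ε = 1 ∧ 0 < c β i - c α i) ∨ (ε = -1 ∧ c β i - c α i < 0)) ∧
          0 < (ε:ℝ) * ⟪γ, b i⟫ := by
        rcases mul_pos_iff.mp hiPos with ⟨h1, h2⟩ | ⟨h1, h2⟩
        · exact ⟨1, Or.inl rfl, Or.inl ⟨rfl, by exact_mod_cast h1⟩, by push_cast; linarith⟩
        · exact ⟨-1, Or.inr rfl, Or.inr ⟨rfl, by exact_mod_cast h1⟩, by push_cast; linarith⟩
      set v : V := (ε:ℝ) • b i with hvdef
      have hvΦ : v ∈ Φ := by
        rcases hε1 with h | h <;> rw [hvdef, h] <;> push_cast <;>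
          simp only [one_smul, neg_smul]
        · exact hb.mem i
        · exact hΦ.neg_mem _ (hb.mem i)
      have hvmem : ∃ i' ∉ Δ₁, v = b i' ∨ v = -(b i') := by
        refine ⟨i, hiΔ, ?_⟩
        rcases hε1 with h | h
        · exact Or.inl (by rw [hvdef, h]; push_cast; rw [one_smul])
        · exact Or.inr (by rw [hvdef, h]; push_cast; rw [neg_one_smul])
      have hγv : 0 < ⟪γ, v⟫ := by rw [hvdef, real_inner_smul_right]; exact hγbi
      have hβαv : ⟪α, v⟫ < ⟪β, v⟫ := by
        have : ⟪γ, v⟫ = ⟪β, v⟫ - ⟪α, v⟫ := by rw [hγdef, inner_sub_left]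
        linarith [hγv, this ▸ hγv]
      by_cases hcase : 0 < ⟪β, v⟫
      · -- move from the β side: β' = β - v
        have hβnev : β ≠ v := hnepm β hβ hβk i hiΔ ε
        have hβ'Φ : β - v ∈ Φ := sub_mem_of_inner_pos hΦ hβ hvΦ hcase hβnev
        have hβ'eq : β - v = β + ((-ε : ℤ) : ℝ) • b i := by
          rw [hvdef]; push_cast; rw [sub_eq_add_neg, ← neg_smul]
        have hcβ' := hstep β hβ (β - v) hβ'Φ i (-ε) hβ'eq
        have hβ'k : ∀ j ∈ Δ₁, c (β - v) j = k j := by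
          intro j hj
          have hji : j ≠ i := fun h => hiΔ (h ▸ hj)
          rw [hcβ' j, if_neg hji, add_zero, hβk j hj]
        have hmeas : (∑ p, (c (β - v) p - c α p).natAbs) < N := by
          rw [← hN]
          refine Finset.sum_lt_sum (fun p _ => ?_) ⟨i, Finset.mem_univ i, ?_⟩
          · rw [hcβ' p]
            by_cases hpi : p = i
            · subst hpi
              rw [if_pos rfl]
              rcases hsign with ⟨he, hd⟩ | ⟨he, hd⟩ <;> subst he <;> omega
            · rw [if_neg hpi, add_zero]
          · rw [hcβ' i, if_pos rfl]
            rcases hsign with ⟨he, hd⟩ | ⟨he, hd⟩ <;> subst he <;> omega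
        obtain ⟨l, hl1, hl2, hl3⟩ := IH _ hmeas α (β - v) hα hβ'Φ hαk hβ'k rfl
        refine ⟨l ++ [v], ?_, ?_, ?_⟩
        · intro x hx
          rcases List.mem_append.mp hx with h | h
          · exact hl1 x h
          · simp only [List.mem_singleton] at h
            exact h ▸ hvmem
        · rw [List.sum_append, List.sum_cons, List.sum_nil, add_zero, ← add_assoc, ← hl2]
          abel
        · intro t ht
          by_cases htl : t ≤ l.length
          · rw [List.take_append_of_le_length htl]
            exact hl3 t htl
          · have ht1 : t = l.length + 1 := by
              simp only [List.length_append, List.length_singleton] at ht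
              omega
            subst ht1
            rw [List.take_of_length_le (by simp), List.sum_append, List.sum_cons,
              List.sum_nil, add_zero, ← add_assoc, ← hl2]
            have hfix : β - v + v = β := by abel
            rw [hfix]
            exact ⟨hβ, hβk⟩
      · -- move from the α side: α' = α + v
        have hαv : ⟪α, v⟫ < 0 := by
          push_neg at hcase; linarith
        have hαnev : α ≠ -v := by
          have := hnepm α hα hαk i hiΔ (-ε)
          intro h; apply this
          rw [h, hvdef]; push_cast; rw [neg_smul]
        have hmvΦ : -v ∈ Φ := hΦ.neg_mem v hvΦ
        have hα'Φ : α + v ∈ Φ := by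
          have := sub_mem_of_inner_pos hΦ hα hmvΦ (by rw [inner_neg_right]; linarith) hαnev
          rwa [sub_neg_eq_add] at this
        have hcα' := hstep α hα (α + v) hα'Φ i ε (by rw [hvdef])
        have hα'k : ∀ j ∈ Δ₁, c (α + v) j = k j := by
          intro j hj
          have hji : j ≠ i := fun h => hiΔ (h ▸ hj)
          rw [hcα' j, if_neg hji, add_zero, hαk j hj]
        have hmeas : (∑ p, (c β p - c (α + v) p).natAbs) < N := by
          rw [← hN]
          refine Finset.sum_lt_sum (fun p _ => ?_) ⟨i, Finset.mem_univ i, ?_⟩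
          · rw [hcα' p]
            by_cases hpi : p = i
            · subst hpi
              rw [if_pos rfl]
              rcases hsign with ⟨he, hd⟩ | ⟨he, hd⟩ <;> subst he <;> omega
            · rw [if_neg hpi, add_zero]
          · rw [hcα' i, if_pos rfl]
            rcases hsign with ⟨he, hd⟩ | ⟨he, hd⟩ <;> subst he <;> omega
        obtain ⟨l, hl1, hl2, hl3⟩ := IH _ hmeas (α + v) β hα'Φ hβ hα'k hβk rfl
        refine ⟨v :: l, ?_, ?_, ?_⟩
        · intro x hx
          rcases List.mem_cons.mp hx with h | h
          · exact h ▸ hvmem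
          · exact hl1 x h
        · rw [List.sum_cons, ← add_assoc]; exact hl2
        · intro t ht
          cases t with
          | zero =>
            simpa using ⟨hα, hαk⟩
          | succ s =>
            have hs : s ≤ l.length := by simpa using ht
            have heq2 : α + ((v :: l).take (s+1)).sum = (α + v) + (l.take s).sum := by
              rw [List.take_succ_cons, List.sum_cons, ← add_assoc]
            rw [heq2]
            exact hl3 s hs
end

section
/- With notation as above, each graded piece 𝔤_{k₁,…,k_l} = ⊕_{α∈Φ_{k₁,…,k_l}} 𝔤_α is an irreducible module under the adjoint action of a Levi factor L of the parabolic subalgebra 𝔮 associated to Δ₁. -/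
open scoped RealInnerProductSpace

private lemma aux_inner_self_pos {V : Type*} [NormedAddCommGroup V] [InnerProductSpace ℝ V]
    {x : V} (hx : x ≠ 0) : 0 < ⟪x, x⟫ :=
  lt_of_le_of_ne real_inner_self_nonneg (fun h => hx (inner_self_eq_zero.mp h.symm))

private lemma aux_coords_unique {V : Type*} [AddCommGroup V] [Module ℝ V]
    {ι : Type*} [Fintype ι] {b : ι → V} (hb : LinearIndependent ℝ b)
    {a a' : ι → ℝ} (h : ∑ i, a i • b i = ∑ i, a' i • b i) : a = a' := by
  have h2 : ∑ i, (a i - a' i) • b i = 0 := by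
    simp only [sub_smul, Finset.sum_sub_distrib, h, sub_self]
  have h3 := Fintype.linearIndependent_iff.mp hb _ h2
  funext i
  have h4 := h3 i
  linarith

private lemma aux_root_sub {V : Type*} [NormedAddCommGroup V] [InnerProductSpace ℝ V]
    {Φ : Set V} (hΦ : IsRootSystem Φ) {α β : V} (hα : α ∈ Φ) (hβ : β ∈ Φ)
    (hne : α ≠ β) (hpos : 0 < ⟪α, β⟫) : α - β ∈ Φ := by
  have hαα : 0 < ⟪α, α⟫ := aux_inner_self_pos (hΦ.ne_zero α hα)
  have hββ : 0 < ⟪β, β⟫ := aux_inner_self_pos (hΦ.ne_zero β hβ)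
  obtain ⟨n, hn⟩ := hΦ.crystallographic β hβ α hα
  obtain ⟨m, hm⟩ := hΦ.crystallographic α hα β hβ
  have hsym : ⟪β, α⟫ = ⟪α, β⟫ := (real_inner_comm β α).symm
  have hn' : 2 * ⟪α, β⟫ = (n : ℝ) * ⟪β, β⟫ := (div_eq_iff hββ.ne').mp hn
  have hm' : 2 * ⟪α, β⟫ = (m : ℝ) * ⟪α, α⟫ := by
    rw [← hsym]; exact (div_eq_iff hαα.ne').mp hm
  have hn1 : 1 ≤ n := by
    have h0 : (0:ℝ) < (n:ℝ) := by nlinarith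
    have h1 : (0:ℤ) < n := by exact_mod_cast h0
    omega
  have hm1 : 1 ≤ m := by
    have h0 : (0:ℝ) < (m:ℝ) := by nlinarith
    have h1 : (0:ℤ) < m := by exact_mod_cast h0
    omega
  by_cases hn2 : n = 1
  · have h := hΦ.reflect_mem β hβ α hα
    rw [hn, hn2] at h
    simpa using h
  · by_cases hm2 : m = 1
    · have h := hΦ.reflect_mem α hα β hβ
      rw [hm, hm2] at h
      have h2 := hΦ.neg_mem _ h
      simpa [neg_sub] using h2
    · exfalso
      have h2n : (2:ℝ) ≤ (n:ℝ) := by exact_mod_cast (by omega : (2:ℤ) ≤ n)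
      have h2m : (2:ℝ) ≤ (m:ℝ) := by exact_mod_cast (by omega : (2:ℤ) ≤ m)
      have hd : 0 < ⟪α - β, α - β⟫ := aux_inner_self_pos (sub_ne_zero.mpr hne)
      rw [real_inner_sub_sub_self] at hd
      nlinarith [mul_le_mul_of_nonneg_right h2n hββ.le,
        mul_le_mul_of_nonneg_right h2m hαα.le]

private lemma aux_components {V : Type*} {L : Type*} [LieRing L] [LieAlgebra ℂ L]
    (Φ : Set V) (𝔥 : Submodule ℂ L) (g : V → Submodule ℂ L) (κ : V → (L →ₗ[ℂ] ℂ))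
    (heig : ∀ α ∈ Φ, ∀ h ∈ 𝔥, ∀ x ∈ g α, ⁅h, x⁆ = κ α h • x)
    (hsep : ∀ α ∈ Φ, ∀ β ∈ Φ, α ≠ β → ∃ h ∈ 𝔥, κ α h ≠ κ β h)
    (W : Submodule ℂ L) (hWh : ∀ h ∈ 𝔥, ∀ w ∈ W, ⁅h, w⁆ ∈ W) :
    ∀ s : Finset V, ↑s ⊆ Φ → ∀ f : V → L, (∀ α ∈ s, f α ∈ g α) →
      (∑ α ∈ s, f α) ∈ W → ∀ γ ∈ s, f γ ∈ W := by
  classical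
  intro s
  induction s using Finset.strongInduction with
  | _ s ih =>
    intro hsΦ f hf hsum γ hγ
    by_cases hcard : s.card ≤ 1
    · have hs1 : s = {γ} := by
        ext a
        simp only [Finset.mem_singleton]
        exact ⟨fun ha => Finset.card_le_one.mp hcard a ha γ hγ, fun h => h ▸ hγ⟩
      rw [hs1, Finset.sum_singleton] at hsum
      exact hsum
    · push_neg at hcard
      obtain ⟨β, hβ, hβγ⟩ := Finset.exists_mem_ne hcard γ
      obtain ⟨h, hh, hκ⟩ := hsep γ (hsΦ hγ) β (hsΦ hβ) (Ne.symm hβγ)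
      set f' : V → L := fun α => ⁅h, f α⁆ - κ β h • f α with hf'def
      have hf'eq : ∀ α ∈ s, f' α = (κ α h - κ β h) • f α := by
        intro α hα
        simp only [hf'def]
        rw [heig α (hsΦ hα) h hh (f α) (hf α hα), sub_smul]
      have hlie : ⁅h, ∑ α ∈ s, f α⁆ = ∑ α ∈ s, ⁅h, f α⁆ := by
        exact map_sum ((LieAlgebra.ad ℂ L) h) f s
      have hsum' : (∑ α ∈ s.erase β, f' α) ∈ W := by
        have h0 : f' β = 0 := by rw [hf'eq β hβ, sub_self, zero_smul]
        rw [Finset.sum_erase _ h0]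
        have hsplit : ∑ α ∈ s, f' α = ⁅h, ∑ α ∈ s, f α⁆ - κ β h • ∑ α ∈ s, f α := by
          rw [hlie, Finset.smul_sum, ← Finset.sum_sub_distrib]
        rw [hsplit]
        exact W.sub_mem (hWh h hh _ hsum) (W.smul_mem _ hsum)
      have hγβ : γ ∈ s.erase β := Finset.mem_erase.mpr ⟨Ne.symm hβγ, hγ⟩
      have hrec := ih (s.erase β) (Finset.erase_ssubset hβ)
        (fun a ha => hsΦ (Finset.mem_of_mem_erase ha)) f'
        (fun α hα => by
          rw [hf'eq α (Finset.mem_of_mem_erase hα)]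
          exact Submodule.smul_mem _ _ (hf α (Finset.mem_of_mem_erase hα)))
        hsum' γ hγβ
      have hd : κ γ h - κ β h ≠ 0 := sub_ne_zero.mpr hκ
      have hfγ : f γ = (κ γ h - κ β h)⁻¹ • f' γ := by
        rw [hf'eq γ hγ, smul_smul, inv_mul_cancel₀ hd, one_smul]
      rw [hfγ]
      exact W.smul_mem _ hrec

/-- let `𝔤 = L` be a complex simple Lie algebra with Cartan subalgebra `𝔥`,
root space decomposition `g : α ↦ 𝔤_α` (one-dimensional root spaces, `[𝔤_α,𝔤_β] = 𝔤_{α+β}`),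
and let `Δ₁` be a set of marked simple roots, defining the parabolic `𝔮` with Levi factor
`𝔩 = 𝔥 ⊕ ⊕_{deg γ = 0} 𝔤_γ`.  Then for every nonzero multidegree `k`, the graded piece
`𝔤_{k₁,…,k_l} = ⊕_{deg α = k} 𝔤_α` is an irreducible `𝔩`-module: every subspace invariant
under `𝔥` and under all root spaces of multidegree `0` is trivial or everything. -/
theorem stmt2 {V : Type*} [NormedAddCommGroup V] [InnerProductSpace ℝ V]
    {ι : Type*} [Fintype ι] {L : Type*} [LieRing L] [LieAlgebra ℂ L]
    [LieAlgebra.IsSimple ℂ L] [FiniteDimensional ℂ L]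
    (Φ : Set V) (b : ι → V) (hΦ : IsRootSystem Φ) (hb : IsBase Φ b)
    (Δ₁ : Set ι) (c : V → ι → ℤ) (hc : ∀ γ ∈ Φ, γ = ∑ i, (c γ i : ℝ) • b i)
    (𝔥 : Submodule ℂ L) (g : V → Submodule ℂ L) (κ : V → (L →ₗ[ℂ] ℂ))
    (hdim : ∀ α ∈ Φ, Module.finrank ℂ (g α) = 1)
    (heig : ∀ α ∈ Φ, ∀ h ∈ 𝔥, ∀ x ∈ g α, ⁅h, x⁆ = κ α h • x)
    (hsep : ∀ α ∈ Φ, ∀ β ∈ Φ, α ≠ β → ∃ h ∈ 𝔥, κ α h ≠ κ β h)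
    (hbracket : ∀ α ∈ Φ, ∀ β ∈ Φ, α + β ∈ Φ →
      Submodule.span ℂ {z : L | ∃ x ∈ g α, ∃ y ∈ g β, z = ⁅x, y⁆} = g (α + β))
    (hbracket0 : ∀ α ∈ Φ, ∀ β ∈ Φ, α + β ∉ Φ → α + β ≠ 0 →
      ∀ x ∈ g α, ∀ y ∈ g β, ⁅x, y⁆ = (0 : L))
    (k : ι → ℤ) (hk : ∃ i ∈ Δ₁, k i ≠ 0) :
    ∀ W : Submodule ℂ L,
      W ≤ (⨆ α ∈ {α | α ∈ Φ ∧ ∀ i ∈ Δ₁, c α i = k i}, g α) →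
      (∀ h ∈ 𝔥, ∀ w ∈ W, ⁅h, w⁆ ∈ W) →
      (∀ α ∈ {α | α ∈ Φ ∧ ∀ i ∈ Δ₁, c α i = 0}, ∀ x ∈ g α, ∀ w ∈ W, ⁅x, w⁆ ∈ W) →
      W = ⊥ ∨ W = (⨆ α ∈ {α | α ∈ Φ ∧ ∀ i ∈ Δ₁, c α i = k i}, g α) := by
  classical
  intro W hWle hWh hW0
  by_cases hWbot : W = ⊥
  · exact Or.inl hWbot
  right
  -- coordinate lemmas
  have cadd : ∀ γ ∈ Φ, ∀ δ ∈ Φ, γ + δ ∈ Φ → ∀ j, c (γ + δ) j = c γ j + c δ j := by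
    intro γ hγ δ hδ hγδ j
    have h1 : ∑ i, ((c (γ + δ) i : ℝ)) • b i = ∑ i, (((c γ i : ℝ)) + (c δ i : ℝ)) • b i := by
      rw [← hc _ hγδ]
      simp only [add_smul, Finset.sum_add_distrib]
      rw [← hc _ hγ, ← hc _ hδ]
    have h2 := congrFun (aux_coords_unique hb.indep h1) j
    exact_mod_cast h2
  have cneg : ∀ γ ∈ Φ, ∀ j, c (-γ) j = -c γ j := by
    intro γ hγ j
    have hnγ : -γ ∈ Φ := hΦ.neg_mem γ hγ
    have h1 : ∑ i, ((c (-γ) i : ℝ)) • b i = ∑ i, (-(c γ i : ℝ)) • b i := by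
      simp only [neg_smul, Finset.sum_neg_distrib]
      rw [← hc _ hnγ, ← hc _ hγ]
    have h2 := congrFun (aux_coords_unique hb.indep h1) j
    exact_mod_cast h2
  have cbase : ∀ i j, c (b i) j = if j = i then 1 else 0 := by
    intro i j
    have h1 : ∑ jx, ((c (b i) jx : ℝ)) • b jx = ∑ jx, (if jx = i then (1:ℝ) else 0) • b jx := by
      rw [← hc _ (hb.mem i)]
      simp [ite_smul]
    have h2 := congrFun (aux_coords_unique hb.indep h1) j
    split_ifs at h2 ⊢ with hji
    · exact_mod_cast h2
    · exact_mod_cast h2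
  -- the degree-zero step
  have step : ∀ γ, γ ∈ Φ → (∀ j ∈ Δ₁, c γ j = 0) → ∀ δ, δ ∈ Φ →
      (∀ j ∈ Δ₁, c δ j = k j) → δ + γ ∈ Φ →
      ((δ + γ ∈ Φ ∧ ∀ j ∈ Δ₁, c (δ + γ) j = k j) ∧ (g δ ≤ W → g (δ + γ) ≤ W)) := by
    intro γ hγΦ hγ0 δ hδΦ hδdeg hδγΦ
    refine ⟨⟨hδγΦ, fun j hj => ?_⟩, fun hgδ => ?_⟩
    · rw [cadd δ hδΦ γ hγΦ hδγΦ j, hδdeg j hj, hγ0 j hj, add_zero]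
    · have hγδΦ : γ + δ ∈ Φ := by rwa [add_comm]
      have hspan := hbracket γ hγΦ δ hδΦ hγδΦ
      have hle : g (γ + δ) ≤ W := by
        rw [← hspan, Submodule.span_le]
        rintro z ⟨x, hx, y, hy, rfl⟩
        exact hW0 γ ⟨hγΦ, hγ0⟩ x hx y (hgδ hy)
      rwa [add_comm γ δ] at hle
  -- measure bookkeeping
  have Nstep : ∀ (d d' : ι → ℤ) (i : ι), (∀ j, j ≠ i → d' j = d j) →
      ((d' i).natAbs + 1 = (d i).natAbs) →
      (∑ j, (d' j).natAbs) + 1 = ∑ j, (d j).natAbs := by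
    intro d d' i hoff hi
    have he : ∑ j ∈ Finset.univ.erase i, (d' j).natAbs
        = ∑ j ∈ Finset.univ.erase i, (d j).natAbs :=
      Finset.sum_congr rfl fun j hj => by rw [hoff j (Finset.ne_of_mem_erase hj)]
    rw [← Finset.sum_erase_add Finset.univ (fun j => (d' j).natAbs) (Finset.mem_univ i),
      ← Finset.sum_erase_add Finset.univ (fun j => (d j).natAbs) (Finset.mem_univ i), he]
    omega
  -- the connectedness chain
  have key : ∀ n : ℕ, ∀ α β : V, α ∈ Φ → (∀ j ∈ Δ₁, c α j = k j) →
      β ∈ Φ → (∀ j ∈ Δ₁, c β j = k j) →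
      (∑ j, (c α j - c β j).natAbs) = n → (g α ≤ W ↔ g β ≤ W) := by
    intro n
    induction n using Nat.strong_induction_on with
    | _ n ih =>
      have main : ∀ α β : V, α ∈ Φ → (∀ j ∈ Δ₁, c α j = k j) →
          β ∈ Φ → (∀ j ∈ Δ₁, c β j = k j) → α ≠ β →
          (∑ j, (c α j - c β j).natAbs) = n → 0 < ⟪α, α - β⟫ →
          (g α ≤ W ↔ g β ≤ W) := by
        intro α β hαΦ hαdeg hβΦ hβdeg hab hN hpos
        have hδcoord : α - β = ∑ j, (((c α j - c β j : ℤ)) : ℝ) • b j := by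
          push_cast
          simp only [sub_smul, Finset.sum_sub_distrib]
          rw [← hc _ hαΦ, ← hc _ hβΦ]
        have hinner : ⟪α, α - β⟫ = ∑ j, (((c α j - c β j : ℤ)) : ℝ) * ⟪α, b j⟫ := by
          rw [hδcoord, inner_sum]
          exact Finset.sum_congr rfl fun j _ => real_inner_smul_right _ _ _
        obtain ⟨i, hi⟩ : ∃ i, 0 < (((c α i - c β i : ℤ)) : ℝ) * ⟪α, b i⟫ := by
          by_contra hcon
          push_neg at hcon
          have hle : ⟪α, α - β⟫ ≤ 0 := by
            rw [hinner]
            exact Finset.sum_nonpos fun j _ => hcon j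
          linarith
        have hiΔ : i ∉ Δ₁ := by
          intro hiΔ
          rw [hαdeg i hiΔ, hβdeg i hiΔ, sub_self] at hi
          simp at hi
        obtain ⟨j₀, hj₀Δ, hkj₀⟩ := hk
        have hij₀ : i ≠ j₀ := fun h => hiΔ (h ▸ hj₀Δ)
        have hbiΦ : b i ∈ Φ := hb.mem i
        have hnbiΦ : -b i ∈ Φ := hΦ.neg_mem _ hbiΦ
        have hdeg0bi : ∀ j ∈ Δ₁, c (b i) j = 0 := by
          intro j hj
          rw [cbase i j, if_neg (fun h : j = i => hiΔ (h ▸ hj))]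
        have hdeg0nbi : ∀ j ∈ Δ₁, c (-b i) j = 0 := by
          intro j hj
          rw [cneg _ hbiΦ j, hdeg0bi j hj, neg_zero]
        have hαnb : α ≠ b i := by
          intro h
          apply hkj₀
          rw [← hαdeg j₀ hj₀Δ, h, cbase i j₀, if_neg (Ne.symm hij₀)]
        have hαnnb : α ≠ -b i := by
          intro h
          apply hkj₀
          rw [← hαdeg j₀ hj₀Δ, h, cneg _ hbiΦ j₀, cbase i j₀, if_neg (Ne.symm hij₀), neg_zero]
        rcases lt_trichotomy ((c α i - c β i : ℤ) : ℝ) 0 with hm | hm | hm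
        · -- coefficient negative ⇒ ⟪α, b i⟫ < 0, use α' = α + b i
          have hipos : 0 < ⟪α, -b i⟫ := by
            rw [inner_neg_right]
            by_contra hge
            push_neg at hge
            have hble : 0 ≤ ⟪α, b i⟫ := by linarith
            nlinarith
          have hα'Φ : α + b i ∈ Φ := by
            have h := aux_root_sub hΦ hαΦ hnbiΦ hαnnb hipos
            rwa [sub_neg_eq_add] at h
          obtain ⟨⟨hα'Φ2, hα'deg⟩, hstep⟩ := step (b i) hbiΦ hdeg0bi α hαΦ hαdeg hα'Φ
          have hback : g (α + b i) ≤ W → g α ≤ W := by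
            intro hg
            have hmem : (α + b i) + -b i ∈ Φ := by rwa [add_neg_cancel_right]
            obtain ⟨_, hstep'⟩ := step (-b i) hnbiΦ hdeg0nbi (α + b i) hα'Φ2 hα'deg hmem
            have h := hstep' hg
            rwa [add_neg_cancel_right] at h
          have hcα' : ∀ j, c (α + b i) j = c α j + (if j = i then 1 else 0) := by
            intro j
            rw [cadd α hαΦ (b i) hbiΦ hα'Φ j, cbase i j]
          have hmZ : c α i - c β i < 0 := by exact_mod_cast hm
          have hNdec : (∑ j, (c (α + b i) j - c β j).natAbs) + 1 = n := by
            rw [← hN]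
            exact Nstep (fun j => c α j - c β j) (fun j => c (α + b i) j - c β j) i
              (fun j hj => by
                show c (α + b i) j - c β j = c α j - c β j
                rw [hcα' j, if_neg hj]; ring)
              (by
                show (c (α + b i) i - c β i).natAbs + 1 = (c α i - c β i).natAbs
                rw [hcα' i, if_pos rfl]; omega)
          have hlt : (∑ j, (c (α + b i) j - c β j).natAbs) < n := by omega
          exact (Iff.intro hstep hback).trans
            (ih _ hlt (α + b i) β hα'Φ2 hα'deg hβΦ hβdeg rfl)
        · rw [hm] at hi
          simp at hi
        · -- coefficient positive ⇒ ⟪α, b i⟫ > 0, use α' = α - b i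
          have hbipos : 0 < ⟪α, b i⟫ := by
            by_contra hge
            push_neg at hge
            nlinarith
          have hα'Φ : α - b i ∈ Φ := aux_root_sub hΦ hαΦ hbiΦ hαnb hbipos
          have hα'Φ' : α + -b i ∈ Φ := by rwa [← sub_eq_add_neg]
          obtain ⟨⟨hα'Φ2, hα'deg⟩, hstep⟩ := step (-b i) hnbiΦ hdeg0nbi α hαΦ hαdeg hα'Φ'
          have hback : g (α + -b i) ≤ W → g α ≤ W := by
            intro hg
            have hmem : (α + -b i) + b i ∈ Φ := by rwa [neg_add_cancel_right]
            obtain ⟨_, hstep'⟩ := step (b i) hbiΦ hdeg0bi (α + -b i) hα'Φ2 hα'deg hmem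
            have h := hstep' hg
            rwa [neg_add_cancel_right] at h
          have hcα' : ∀ j, c (α + -b i) j = c α j - (if j = i then 1 else 0) := by
            intro j
            rw [cadd α hαΦ (-b i) hnbiΦ hα'Φ' j, cneg _ hbiΦ j, cbase i j]
            ring
          have hmZ : 0 < c α i - c β i := by exact_mod_cast hm
          have hNdec : (∑ j, (c (α + -b i) j - c β j).natAbs) + 1 = n := by
            rw [← hN]
            exact Nstep (fun j => c α j - c β j) (fun j => c (α + -b i) j - c β j) i
              (fun j hj => by
                show c (α + -b i) j - c β j = c α j - c β j
                rw [hcα' j, if_neg hj]; ring)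
              (by
                show (c (α + -b i) i - c β i).natAbs + 1 = (c α i - c β i).natAbs
                rw [hcα' i, if_pos rfl]; omega)
          have hlt : (∑ j, (c (α + -b i) j - c β j).natAbs) < n := by omega
          exact (Iff.intro hstep hback).trans
            (ih _ hlt (α + -b i) β hα'Φ2 hα'deg hβΦ hβdeg rfl)
      intro α β hαΦ hαdeg hβΦ hβdeg hN
      by_cases hab : α = β
      · rw [hab]
      · have h0 : 0 < ⟪α - β, α - β⟫ := aux_inner_self_pos (sub_ne_zero.mpr hab)
        have hcases : 0 < ⟪α, α - β⟫ ∨ 0 < ⟪β, β - α⟫ := by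
          by_contra hcon
          push_neg at hcon
          have e1 : ⟪α - β, α - β⟫ = ⟪α, α - β⟫ - ⟪β, α - β⟫ := inner_sub_left α β (α - β)
          have e2 : ⟪β, β - α⟫ = -⟪β, α - β⟫ := by
            rw [show β - α = -(α - β) by abel, inner_neg_right]
          linarith [hcon.1, hcon.2]
        rcases hcases with hcase | hcase
        · exact main α β hαΦ hαdeg hβΦ hβdeg hab hN hcase
        · have hN' : (∑ j, (c β j - c α j).natAbs) = n := by
            rw [← hN]
            exact Finset.sum_congr rfl fun j _ => by omega
          exact (main β α hβΦ hβdeg hαΦ hαdeg (Ne.symm hab) hN' hcase).symm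
  -- find a nonzero vector of W and one of its components
  obtain ⟨w, hwW, hw0⟩ := W.ne_bot_iff.mp hWbot
  have hSfin : {α | α ∈ Φ ∧ ∀ i ∈ Δ₁, c α i = k i}.Finite :=
    hΦ.finite.subset fun α hα => hα.1
  have hFS : ∀ a : V, a ∈ hSfin.toFinset ↔ (a ∈ Φ ∧ ∀ i ∈ Δ₁, c a i = k i) := fun a =>
    hSfin.mem_toFinset
  have hsup : (⨆ α ∈ {α | α ∈ Φ ∧ ∀ i ∈ Δ₁, c α i = k i}, g α)
      = ⨆ α ∈ hSfin.toFinset, g α := by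
    apply le_antisymm
    · exact iSup₂_le fun a ha =>
        le_iSup₂ (f := fun (α : V) (_ : α ∈ hSfin.toFinset) => g α) a ((hFS a).mpr ha)
    · exact iSup₂_le fun a ha =>
        le_iSup₂ (f := fun (α : V) (_ : α ∈ {α | α ∈ Φ ∧ ∀ i ∈ Δ₁, c α i = k i}) => g α)
          a ((hFS a).mp ha)
  have hwsup : w ∈ ⨆ α ∈ hSfin.toFinset, g α := by
    rw [← hsup]; exact hWle hwW
  obtain ⟨μ, hμ⟩ := (Submodule.mem_iSup_finset_iff_exists_sum (fun α => g α) w).mp hwsup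
  obtain ⟨α₀, hα₀F, hμ0⟩ : ∃ α₀ ∈ hSfin.toFinset, (μ α₀ : L) ≠ 0 := by
    by_contra hcon
    push_neg at hcon
    apply hw0
    rw [← hμ]
    exact Finset.sum_eq_zero hcon
  have hcomp : (μ α₀ : L) ∈ W :=
    aux_components Φ 𝔥 g κ heig hsep W hWh hSfin.toFinset
      (fun a ha => ((hFS a).mp ha).1) (fun α => (μ α : L))
      (fun α _ => (μ α).2) (by rw [hμ]; exact hwW) α₀ hα₀F
  have hα₀S := (hFS α₀).mp hα₀F
  have hgα₀ : g α₀ ≤ W := by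
    have hspan : Submodule.span ℂ {(μ α₀ : L)} = g α₀ := by
      apply Submodule.eq_of_le_of_finrank_eq
      · rw [Submodule.span_le, Set.singleton_subset_iff]
        exact (μ α₀).2
      · rw [finrank_span_singleton hμ0, hdim α₀ hα₀S.1]
    rw [← hspan, Submodule.span_le, Set.singleton_subset_iff]
    exact hcomp
  have hall : ∀ β, β ∈ Φ → (∀ j ∈ Δ₁, c β j = k j) → g β ≤ W := fun β hβΦ hβdeg =>
    (key _ α₀ β hα₀S.1 hα₀S.2 hβΦ hβdeg rfl).mp hgα₀
  apply le_antisymm hWle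
  exact iSup₂_le fun β hβ => hall β hβ.1 hβ.2
end

section
/- Let V be a finite-dimensional complex vector space, X ⊂ H ⊂ V with dim X = 1 and H a hyperplane. Let D¹ = Hom(X, H/X) ⊕ Hom(H/X, V/H) and ℐ′ = {[ζ ⊕ η] ∈ ℙ(D¹) : ζ ≠ 0, η ≠ 0, η ∘ ζ = 0}. Then the group Q = {A ∈ GL(V) : A(X) = X, A(H) = H}, acting by A·(ζ ⊕ η) = (AζA⁻¹) ⊕ (AηA⁻¹), acts transitively on ℐ′. -/
/-!
Take `e` trivial on `X` and on `V/H` (and `c = 1`); then everything happens on `W = H/X`.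
Pick a generator `x₀` of `X`. Both `η_i : W → V/H` are surjections onto a line, and the
`w_i = ζ_i x₀` are nonzero vectors in their kernels, so some automorphism `f` of `W` carries
`w₁` to `w₂` and satisfies `η₂ ∘ f = η₁`: glue an isomorphism `ker η₁ ≃ ker η₂` sending
`w₁ ↦ w₂` to the isomorphism `W/ker η₁ ≃ V/H ≃ W/ker η₂`. Finally `f` lifts to an automorphism
of `H` fixing `X` pointwise, which extends to `V` acting trivially on `V/H`.
-/

open Module Submodule

section DivisionRing

variable {K M₁ M₂ : Type*} [DivisionRing K] [AddCommGroup M₁] [Module K M₁]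
  [AddCommGroup M₂] [Module K M₂]

theorem Submodule.exists_linearEquiv_restrict_eq_and_mkQ {p₁ : Submodule K M₁}
    {p₂ : Submodule K M₂} (g : p₁ ≃ₗ[K] p₂) (f : (M₁ ⧸ p₁) ≃ₗ[K] (M₂ ⧸ p₂)) :
    ∃ e : M₁ ≃ₗ[K] M₂, (∀ x : p₁, e x = g x) ∧ ∀ v, p₂.mkQ (e v) = f (p₁.mkQ v) := by
  obtain ⟨q₁, h₁⟩ := p₁.exists_isCompl
  obtain ⟨q₂, h₂⟩ := p₂.exists_isCompl
  let fq : q₁ ≃ₗ[K] q₂ := (p₁.quotientEquivOfIsCompl q₁ h₁).symm ≪≫ₗ f ≪≫ₗ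
    p₂.quotientEquivOfIsCompl q₂ h₂
  let e := (p₁.prodEquivOfIsCompl q₁ h₁).symm ≪≫ₗ g.prodCongr fq ≪≫ₗ
    p₂.prodEquivOfIsCompl q₂ h₂
  have he_p (x : p₁) : e x = g x := by simp [e]
  have he_q (y : q₁) : e y = fq y := by simp [e]
  refine ⟨e, he_p, fun v => LinearMap.congr_fun (?_ : p₂.mkQ ∘ₗ e.toLinearMap = f ∘ₗ p₁.mkQ) v⟩
  refine LinearMap.ext_on_codisjoint h₁.codisjoint (fun x hx => ?_) (fun y hy => ?_)
  · have hex : e x = g ⟨x, hx⟩ := he_p ⟨x, hx⟩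
    simp [(Quotient.mk_eq_zero p₁).2 hx, hex, (g ⟨x, hx⟩).2]
  · simpa [fq] using congr_arg p₂.mkQ (he_q ⟨y, hy⟩)

theorem exists_linearEquiv_apply_eq {x y : M₁} (hx : x ≠ 0) (hy : y ≠ 0) :
    ∃ g : M₁ ≃ₗ[K] M₁, g x = y := by
  obtain ⟨g, hg⟩ := Submodule.exists_linearEquiv_restrict_eq
    (LinearEquiv.coord K M₁ x hx ≪≫ₗ LinearEquiv.toSpanNonzeroSingleton K M₁ y hy)
  exact ⟨g, by simpa [LinearEquiv.coord_self] using (hg ⟨x, mem_span_singleton_self x⟩).symm⟩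

theorem exists_linearEquiv_apply_eq_of_finrank_eq [FiniteDimensional K M₁]
    [FiniteDimensional K M₂] (h : finrank K M₁ = finrank K M₂) {x : M₁} {y : M₂}
    (hx : x ≠ 0) (hy : y ≠ 0) : ∃ g : M₁ ≃ₗ[K] M₂, g x = y := by
  let g₀ := LinearEquiv.ofFinrankEq M₁ M₂ h
  obtain ⟨g, hg⟩ := exists_linearEquiv_apply_eq (K := K) (g₀.map_ne_zero_iff.2 hx) hy
  exact ⟨g₀ ≪≫ₗ g, hg⟩

theorem exists_linearEquiv_apply_eq_and_comp_eq {U : Type*} [AddCommGroup U] [Module K U]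
    [FiniteDimensional K M₁] {φ₁ φ₂ : M₁ →ₗ[K] U} (hφ₁ : Function.Surjective φ₁)
    (hφ₂ : Function.Surjective φ₂) {w₁ w₂ : M₁} (hw₁ : w₁ ≠ 0) (hw₂ : w₂ ≠ 0)
    (hφw₁ : φ₁ w₁ = 0) (hφw₂ : φ₂ w₂ = 0) :
    ∃ f : M₁ ≃ₗ[K] M₁, f w₁ = w₂ ∧ φ₂ ∘ₗ f.toLinearMap = φ₁ := by
  have hker : finrank K (LinearMap.ker φ₁) = finrank K (LinearMap.ker φ₂) := by
    have h₁ := φ₁.finrank_range_add_finrank_ker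
    have h₂ := φ₂.finrank_range_add_finrank_ker
    rw [LinearMap.range_eq_top.2 hφ₁, finrank_top] at h₁
    rw [LinearMap.range_eq_top.2 hφ₂, finrank_top] at h₂
    omega
  obtain ⟨g, hg⟩ := exists_linearEquiv_apply_eq_of_finrank_eq hker
    (x := ⟨w₁, hφw₁⟩) (y := ⟨w₂, hφw₂⟩)
    (by simpa [← Subtype.coe_ne_coe] using hw₁) (by simpa [← Subtype.coe_ne_coe] using hw₂)
  obtain ⟨f, hfg, hf⟩ := Submodule.exists_linearEquiv_restrict_eq_and_mkQ g
    (φ₁.quotKerEquivOfSurjective hφ₁ ≪≫ₗ (φ₂.quotKerEquivOfSurjective hφ₂).symm)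
  refine ⟨f, by simpa [hg] using hfg ⟨w₁, hφw₁⟩, LinearMap.ext fun v => ?_⟩
  simpa using congr_arg (φ₂.quotKerEquivOfSurjective hφ₂) (hf v)

end DivisionRing

theorem stmt9_general {V : Type*} [AddCommGroup V] [Module ℂ V] [FiniteDimensional ℂ V]
    (X H : Submodule ℂ V) (hXH : X ≤ H)
    (hX : Module.finrank ℂ X = 1)
    (hH : Module.finrank ℂ H + 1 = Module.finrank ℂ V)
    (ζ₁ ζ₂ : X →ₗ[ℂ] (H ⧸ X.comap H.subtype))
    (η₁ η₂ : (H ⧸ X.comap H.subtype) →ₗ[ℂ] (V ⧸ H))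
    (hζ₁ : ζ₁ ≠ 0) (hζ₂ : ζ₂ ≠ 0) (hη₁ : η₁ ≠ 0) (hη₂ : η₂ ≠ 0)
    (hc₁ : η₁ ∘ₗ ζ₁ = 0) (hc₂ : η₂ ∘ₗ ζ₂ = 0) :
    ∃ (e : V ≃ₗ[ℂ] V) (eX : X ≃ₗ[ℂ] X) (eH : H ≃ₗ[ℂ] H)
      (eHX : (H ⧸ X.comap H.subtype) ≃ₗ[ℂ] (H ⧸ X.comap H.subtype))
      (eVH : (V ⧸ H) ≃ₗ[ℂ] (V ⧸ H)) (c : ℂˣ),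
      (∀ x : X, (eX x : V) = e (x : V)) ∧
      (∀ h : H, (eH h : V) = e (h : V)) ∧
      (∀ h : H, eHX ((X.comap H.subtype).mkQ h) = (X.comap H.subtype).mkQ (eH h)) ∧
      (∀ v : V, eVH (H.mkQ v) = H.mkQ (e v)) ∧
      ζ₂ = (c : ℂ) • (eHX.toLinearMap ∘ₗ ζ₁ ∘ₗ eX.symm.toLinearMap) ∧
      η₂ = (c : ℂ) • (eVH.toLinearMap ∘ₗ η₁ ∘ₗ eHX.symm.toLinearMap) := by
  have : IsSimpleModule ℂ (V ⧸ H) := isSimpleModule_iff_finrank_eq_one.2 <| by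
    have := H.finrank_quotient_add_finrank
    omega
  obtain ⟨x₀, hx₀, -⟩ := finrank_eq_one_iff'.1 hX
  have hspan := (finrank_eq_one_iff_of_nonzero x₀ hx₀).1 hX
  have apply_ne_zero (ζ : X →ₗ[ℂ] (H ⧸ X.comap H.subtype)) (hζ : ζ ≠ 0) : ζ x₀ ≠ 0 :=
    fun h => hζ (LinearMap.ext_on hspan (by simpa using h))
  obtain ⟨f, hfζ, hfη⟩ := exists_linearEquiv_apply_eq_and_comp_eq
    (LinearMap.surjective_of_ne_zero hη₁) (LinearMap.surjective_of_ne_zero hη₂)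
    (apply_ne_zero ζ₁ hζ₁) (apply_ne_zero ζ₂ hζ₂)
    (LinearMap.congr_fun hc₁ x₀) (LinearMap.congr_fun hc₂ x₀)
  obtain ⟨eH, heH, hfH⟩ :=
    Submodule.exists_linearEquiv_restrict_eq_and_mkQ (.refl ℂ (X.comap H.subtype)) f
  obtain ⟨e, he, heVH⟩ := Submodule.exists_linearEquiv_restrict_eq_and_mkQ eH (.refl ℂ (V ⧸ H))
  refine ⟨e, .refl ℂ X, eH, f, .refl ℂ (V ⧸ H), 1, fun x => ?_, fun h => (he h).symm,
    fun h => (hfH h).symm, fun v => (heVH v).symm, ?_, ?_⟩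
  · exact ((he ⟨x, hXH x.2⟩).trans (congr_arg Subtype.val (heH ⟨⟨x, hXH x.2⟩, x.2⟩))).symm
  · rw [Units.val_one, one_smul]
    exact LinearMap.ext_on hspan (by simpa using hfζ.symm)
  · rw [Units.val_one, one_smul, ← hfη]
    ext w
    simp

/-- let `X ⊂ H ⊂ V` with `dim X = 1` and `H` a hyperplane.  The stabilizer
`Q ⊂ GL(V)` of the flag, acting by conjugation on
`D¹ = Hom(X, H/X) ⊕ Hom(H/X, V/H)`, acts transitively on the projectivized set
`ℐ′ = {[ζ ⊕ η] : ζ ≠ 0, η ≠ 0, η ∘ ζ = 0}`: any two such pairs differ by an element of `Q`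
(acting through the induced maps on `X`, `H/X`, `V/H`) up to a scalar. -/
theorem stmt9 {V : Type*} [AddCommGroup V] [Module ℂ V] [FiniteDimensional ℂ V]
    (X H : Submodule ℂ V) (hXH : X ≤ H)
    (hX : Module.finrank ℂ X = 1)
    (hH : Module.finrank ℂ H + 1 = Module.finrank ℂ V)
    (hV : 3 ≤ Module.finrank ℂ V)
    (ζ₁ ζ₂ : X →ₗ[ℂ] (H ⧸ X.comap H.subtype))
    (η₁ η₂ : (H ⧸ X.comap H.subtype) →ₗ[ℂ] (V ⧸ H))
    (hζ₁ : ζ₁ ≠ 0) (hζ₂ : ζ₂ ≠ 0) (hη₁ : η₁ ≠ 0) (hη₂ : η₂ ≠ 0)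
    (hc₁ : η₁ ∘ₗ ζ₁ = 0) (hc₂ : η₂ ∘ₗ ζ₂ = 0) :
    ∃ (e : V ≃ₗ[ℂ] V) (eX : X ≃ₗ[ℂ] X) (eH : H ≃ₗ[ℂ] H)
      (eHX : (H ⧸ X.comap H.subtype) ≃ₗ[ℂ] (H ⧸ X.comap H.subtype))
      (eVH : (V ⧸ H) ≃ₗ[ℂ] (V ⧸ H)) (c : ℂˣ),
      (∀ x : X, (eX x : V) = e (x : V)) ∧
      (∀ h : H, (eH h : V) = e (h : V)) ∧
      (∀ h : H, eHX ((X.comap H.subtype).mkQ h) = (X.comap H.subtype).mkQ (eH h)) ∧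
      (∀ v : V, eVH (H.mkQ v) = H.mkQ (e v)) ∧
      ζ₂ = (c : ℂ) • (eHX.toLinearMap ∘ₗ ζ₁ ∘ₗ eX.symm.toLinearMap) ∧
      η₂ = (c : ℂ) • (eVH.toLinearMap ∘ₗ η₁ ∘ₗ eHX.symm.toLinearMap) :=
  stmt9_general X H hXH hX hH ζ₁ ζ₂ η₁ η₂ hζ₁ hζ₂ hη₁ hη₂ hc₁ hc₂
end

section
/- Any Q-invariant closed subvariety 𝒥 ⊂ ℙ(D¹) which is not contained in ℙ(Hom(X, H/X)) ∪ ℙ(Hom(H/X, V/H)) contains the variety ℐ = ℙ{ζ ⊕ η : η ∘ ζ = 0}. -/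
/-!
The Levi factor of `Q` acts on `D¹ = Hom(X, H/X) ⊕ Hom(H/X, V/H)` by
`(ζ, η) ↦ (g ∘ ζ, b • η ∘ g⁻¹)`, and since `X` and `V/H` are lines its orbits are determined by
which of `ζ`, `η`, `η ∘ ζ` vanish. A closed invariant cone contains `p` whenever it contains
`p + t • q` for all `t ≠ 0`. Starting from `(ζ₀, η₀) ∈ J` with `ζ₀, η₀ ≠ 0`, scaling one
component to zero gives `(ζ₀, 0)`, `(0, η₀)` and `0`; a point with `ζ ≠ 0` and `η ∘ ζ = 0` is
either in the orbit of `(ζ₀, η₀)` or the limit of points `(ζ, η + t • η₀ ∘ g)` that are, where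
`g ∘ ζ = ζ₀`. So every orbit in `ℐ` meets `J`.
-/

open Module Submodule Filter Topology

section LinearAlgebra

variable {K U U' : Type*} [Field K] [AddCommGroup U] [Module K U] [AddCommGroup U'] [Module K U']

theorem exists_linearEquiv_of_isCompl {p q : Submodule K U} {p' q' : Submodule K U'}
    (h : IsCompl p q) (h' : IsCompl p' q') (e₁ : p ≃ₗ[K] p') (e₂ : q ≃ₗ[K] q') :
    ∃ g : U ≃ₗ[K] U', (∀ x : p, g x = e₁ x) ∧ ∀ y : q, g y = e₂ y :=
  ⟨(prodEquivOfIsCompl p q h).symm ≪≫ₗ e₁.prodCongr e₂ ≪≫ₗ prodEquivOfIsCompl p' q' h',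
    fun x => by simp, fun y => by simp⟩

theorem exists_linearEquiv_span_singleton {u : U} {u' : U'} (hu : u ≠ 0) (hu' : u' ≠ 0) :
    ∃ e : (K ∙ u) ≃ₗ[K] (K ∙ u'),
      e ⟨u, mem_span_singleton_self u⟩ = ⟨u', mem_span_singleton_self u'⟩ :=
  ⟨(LinearEquiv.toSpanNonzeroSingleton K U u hu).symm ≪≫ₗ
      LinearEquiv.toSpanNonzeroSingleton K U' u' hu', by
    rw [LinearEquiv.trans_apply, ← LinearEquiv.toSpanNonzeroSingleton_one K U u hu,
      LinearEquiv.symm_apply_apply, LinearEquiv.toSpanNonzeroSingleton_one]⟩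

theorem exists_linearEquiv_apply_eq_s10 [FiniteDimensional K U] [FiniteDimensional K U']
    (hr : finrank K U = finrank K U') {u : U} {u' : U'} (hu : u = 0 ↔ u' = 0) :
    ∃ g : U ≃ₗ[K] U', g u = u' := by
  let e₀ := LinearEquiv.ofFinrankEq U U' hr
  rcases eq_or_ne u 0 with h0 | h0
  · exact ⟨e₀, by simp [h0, hu.mp h0]⟩
  have he₀ : e₀ u ≠ 0 := by simpa using h0
  obtain ⟨f, hf⟩ := exists_linearEquiv_span_singleton (K := K) he₀ (mt hu.mpr h0)
  obtain ⟨g, hg⟩ := exists_linearEquiv_restrict_eq f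
  exact ⟨e₀ ≪≫ₗ g, by simpa [hf] using (hg ⟨e₀ u, mem_span_singleton_self _⟩).symm⟩

theorem exists_linearEquiv_restrict_mkQ (p : Submodule K U) (p' : Submodule K U')
    (f : p ≃ₗ[K] p') (g : (U ⧸ p) ≃ₗ[K] (U' ⧸ p')) :
    ∃ e : U ≃ₗ[K] U', (∀ x : p, (f x : U') = e x) ∧ ∀ v, g (p.mkQ v) = p'.mkQ (e v) := by
  obtain ⟨q, hq⟩ := p.exists_isCompl
  obtain ⟨q', hq'⟩ := p'.exists_isCompl
  obtain ⟨e, hep, heq⟩ := exists_linearEquiv_of_isCompl hq hq' f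
    ((quotientEquivOfIsCompl p q hq).symm ≪≫ₗ g ≪≫ₗ quotientEquivOfIsCompl p' q' hq')
  refine ⟨e, fun x => (hep x).symm, fun v => LinearMap.congr_fun (?_ :
    g.toLinearMap ∘ₗ p.mkQ = p'.mkQ ∘ₗ e.toLinearMap) v⟩
  refine LinearMap.ext_on_codisjoint hq.codisjoint (fun x hx => ?_) (fun y hy => ?_)
  · simp [hep ⟨x, hx⟩, (Quotient.mk_eq_zero p).mpr hx, (Quotient.mk_eq_zero p').mpr (f ⟨x, hx⟩).2]
  · simp [heq ⟨y, hy⟩]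

end LinearAlgebra

section Pairs

variable {K X W L : Type*} [Field K] [AddCommGroup X] [Module K X] [AddCommGroup W] [Module K W]
  [AddCommGroup L] [Module K L]

theorem LinearMap.surjective_of_ne_zero_of_finrank_eq_one (hL : finrank K L = 1)
    {η : W →ₗ[K] L} (hη : η ≠ 0) : Function.Surjective η := by
  obtain ⟨u, hu⟩ : ∃ u, η u ≠ 0 := by
    by_contra! h
    exact hη (LinearMap.ext h)
  intro y
  obtain ⟨c, rfl⟩ := (finrank_eq_one_iff_of_nonzero' (η u) hu).mp hL y
  exact ⟨c • u, map_smul η c u⟩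

theorem isCompl_span_singleton_ker (hL : finrank K L = 1) {η : W →ₗ[K] L} {u : W}
    (hu : η u ≠ 0) : IsCompl (K ∙ u) (LinearMap.ker η) := by
  refine ⟨disjoint_def.mpr fun x hx hker => ?_, codisjoint_iff.mpr (eq_top_iff.mpr fun v _ => ?_)⟩
  · obtain ⟨c, rfl⟩ := mem_span_singleton.mp hx
    have hc : c = 0 := by simpa [hu] using hker
    simp [hc]
  · obtain ⟨c, hc⟩ := (finrank_eq_one_iff_of_nonzero' (η u) hu).mp hL (η v)
    refine mem_sup.mpr ⟨c • u, smul_mem _ c (mem_span_singleton_self u), v - c • u, ?_, by abel⟩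
    simp [hc]

theorem exists_linearEquiv_comp_eq_of_ker [FiniteDimensional K W] (hL : finrank K L = 1)
    {η η' : W →ₗ[K] L} {u u' k k' : W} (hu : η u ≠ 0) (hu' : η' u' = η u) (hk : η k = 0)
    (hk' : η' k' = 0) (hkk : k = 0 ↔ k' = 0) :
    ∃ g : W ≃ₗ[K] W, g u = u' ∧ g k = k' ∧ η' ∘ₗ g.toLinearMap = η := by
  have hC := isCompl_span_singleton_ker hL hu
  have hC' := isCompl_span_singleton_ker hL (hu' ▸ hu : η' u' ≠ 0)
  have hu0 : u ≠ 0 := by rintro rfl; simp at hu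
  have hu'0 : u' ≠ 0 := by rintro rfl; exact hu (by simpa using hu'.symm)
  have hrank : finrank K (LinearMap.ker η) = finrank K (LinearMap.ker η') := by
    have := finrank_add_eq_of_isCompl hC
    have := finrank_add_eq_of_isCompl hC'
    simp only [finrank_span_singleton hu0, finrank_span_singleton hu'0] at *
    omega
  obtain ⟨e₁, he₁⟩ := exists_linearEquiv_span_singleton (K := K) hu0 hu'0
  obtain ⟨e₂, he₂⟩ := exists_linearEquiv_apply_eq_s10 hrank
    (u := ⟨k, LinearMap.mem_ker.mpr hk⟩) (u' := ⟨k', LinearMap.mem_ker.mpr hk'⟩)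
    (by simpa [mk_eq_zero] using hkk)
  obtain ⟨g, hg₁, hg₂⟩ := exists_linearEquiv_of_isCompl hC hC' e₁ e₂
  have hgu : g u = u' := by simpa [he₁] using hg₁ ⟨u, mem_span_singleton_self u⟩
  refine ⟨g, hgu, by simpa [he₂] using hg₂ ⟨k, hk⟩, ?_⟩
  refine LinearMap.ext_on_codisjoint hC.codisjoint (fun x hx => ?_) (fun x hx => ?_)
  · obtain ⟨c, rfl⟩ := mem_span_singleton.mp hx
    simp [hgu, hu']
  · simp [hg₂ ⟨x, hx⟩, LinearMap.mem_ker.mp hx, LinearMap.mem_ker.mp (e₂ ⟨x, hx⟩).2]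

theorem exists_linearEquiv_apply_eq_and_comp_eq_s10 [FiniteDimensional K W] (hL : finrank K L = 1)
    {w w' : W} {η η' : W →ₗ[K] L} (hw : w = 0 ↔ w' = 0) (hη : η = 0 ↔ η' = 0) (h : η w = η' w') :
    ∃ g : W ≃ₗ[K] W, g w = w' ∧ η' ∘ₗ g.toLinearMap = η := by
  rcases eq_or_ne η 0 with hη0 | hη0
  · obtain ⟨g, hg⟩ := exists_linearEquiv_apply_eq_s10 (K := K) rfl hw
    exact ⟨g, hg, by simp [hη0, hη.mp hη0]⟩
  by_cases hw0 : η w = 0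
  · obtain ⟨u, hu⟩ : ∃ u, η u ≠ 0 := by
      by_contra! hu
      exact hη0 (LinearMap.ext hu)
    obtain ⟨u', hu'⟩ :=
      LinearMap.surjective_of_ne_zero_of_finrank_eq_one hL (mt hη.mpr hη0) (η u)
    obtain ⟨g, -, hgw, hg⟩ := exists_linearEquiv_comp_eq_of_ker hL hu hu' hw0 (h ▸ hw0) hw
    exact ⟨g, hgw, hg⟩
  · obtain ⟨g, hgw, -, hg⟩ := exists_linearEquiv_comp_eq_of_ker hL hw0 h.symm (map_zero η)
      (map_zero η') Iff.rfl
    exact ⟨g, hgw, hg⟩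

theorem LinearMap.ext_of_finrank_eq_one {M : Type*} [AddCommGroup M] [Module K M]
    (hX : finrank K X = 1) {x₀ : X} (hx₀ : x₀ ≠ 0) {f f' : X →ₗ[K] M} (h : f x₀ = f' x₀) :
    f = f' := by
  ext x
  obtain ⟨c, rfl⟩ := (finrank_eq_one_iff_of_nonzero' x₀ hx₀).mp hX x
  simp [h]

theorem exists_linearEquiv_comp_eq_and_comp_eq [FiniteDimensional K W] (hX : finrank K X = 1)
    (hL : finrank K L = 1) {ζ ζ' : X →ₗ[K] W} {η η' : W →ₗ[K] L} (hζ : ζ = 0 ↔ ζ' = 0)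
    (hη : η = 0 ↔ η' = 0) (h : η ∘ₗ ζ = η' ∘ₗ ζ') :
    ∃ g : W ≃ₗ[K] W, g.toLinearMap ∘ₗ ζ = ζ' ∧ η' ∘ₗ g.toLinearMap = η := by
  have : Nontrivial X := nontrivial_of_finrank_eq_succ hX
  obtain ⟨x₀, hx₀⟩ := exists_ne (0 : X)
  have hzero (f : X →ₗ[K] W) : f = 0 ↔ f x₀ = 0 :=
    ⟨fun hf => by simp [hf], fun hf => LinearMap.ext_of_finrank_eq_one hX hx₀ (by simpa using hf)⟩
  obtain ⟨g, hgw, hg⟩ := exists_linearEquiv_apply_eq_and_comp_eq_s10 hL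
    (by rwa [← hzero, ← hzero]) hη (LinearMap.congr_fun h x₀)
  exact ⟨g, LinearMap.ext_of_finrank_eq_one hX hx₀ (by simpa using hgw), hg⟩

end Pairs

theorem mem_of_forall_add_smul_mem {𝕜 E F : Type*} [NontriviallyNormedField 𝕜]
    [AddCommGroup E] [Module 𝕜 E] [AddCommGroup F] [Module 𝕜 F] [TopologicalSpace F]
    [ContinuousAdd F] [ContinuousSMul 𝕜 F] (φ : E ≃ₗ[𝕜] F) {J : Set E} (hJ : IsClosed (φ '' J))
    {p q : E} (h : ∀ t : 𝕜, t ≠ 0 → p + t • q ∈ J) : p ∈ J := by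
  have hlim : Tendsto (fun t : 𝕜 => φ p + t • φ q) (𝓝[≠] 0) (𝓝 (φ p)) := by
    have hcont : Continuous fun t : 𝕜 => φ p + t • φ q := by fun_prop
    simpa using (hcont.tendsto 0).mono_left nhdsWithin_le_nhds
  obtain ⟨y, hy, hyp⟩ := hJ.mem_of_tendsto hlim <|
    eventually_mem_nhdsWithin.mono fun t ht => ⟨p + t • q, h t ht, by simp⟩
  exact φ.injective hyp ▸ hy


section Cone

variable {K X W L : Type*} [Field K] [AddCommGroup X] [Module K X] [AddCommGroup W] [Module K W]
  [FiniteDimensional K W] [AddCommGroup L] [Module K L] {J : Set ((X →ₗ[K] W) × (W →ₗ[K] L))}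

/-- Invariance under the Levi factor `GL(X) × GL(H/X) × GL(V/H)` of the flag stabiliser, with
`W = H/X` and `L = V/H`; the factor `GL(X)` consists of scalars and is absorbed into `g` and `b`. -/
def IsLeviInvariant (J : Set ((X →ₗ[K] W) × (W →ₗ[K] L))) : Prop :=
  ∀ (g : W ≃ₗ[K] W) (b : K), b ≠ 0 → ∀ z ∈ J,
    (g.toLinearMap ∘ₗ z.1, b • (z.2 ∘ₗ g.symm.toLinearMap)) ∈ J

theorem mem_of_comp_eq_smul_comp (hX : finrank K X = 1) (hL : finrank K L = 1)
    (hJ : IsLeviInvariant J) {z z' : (X →ₗ[K] W) × (W →ₗ[K] L)} (hz : z ∈ J)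
    (h1 : z.1 = 0 ↔ z'.1 = 0) (h2 : z.2 = 0 ↔ z'.2 = 0) {c : K} (hc : c ≠ 0)
    (h : z'.2 ∘ₗ z'.1 = c • (z.2 ∘ₗ z.1)) : z' ∈ J := by
  obtain ⟨g, hg1, hg2⟩ := exists_linearEquiv_comp_eq_and_comp_eq hX hL (η := c • z.2)
    (η' := z'.2) h1 (by rwa [smul_eq_zero, or_iff_right hc]) (by rw [h, LinearMap.smul_comp])
  convert hJ g c hc z hz using 1
  ext1
  · exact hg1.symm
  · rw [← LinearMap.smul_comp, ← hg2, LinearMap.comp_assoc]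
    simp

theorem mk_fst_zero_mem_of_mem (hX : finrank K X = 1) (hL : finrank K L = 1)
    (hJ : IsLeviInvariant J) (hdeg : ∀ p q, (∀ t : K, t ≠ 0 → p + t • q ∈ J) → p ∈ J)
    {z : (X →ₗ[K] W) × (W →ₗ[K] L)} (hz : z ∈ J) : (z.1, 0) ∈ J :=
  hdeg _ (0, z.2) fun t ht => mem_of_comp_eq_smul_comp hX hL hJ hz (by simp) (by simp [ht]) ht
    (by simp [LinearMap.smul_comp])

theorem mk_zero_snd_mem_of_mem (hX : finrank K X = 1) (hL : finrank K L = 1)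
    (hJ : IsLeviInvariant J) (hdeg : ∀ p q, (∀ t : K, t ≠ 0 → p + t • q ∈ J) → p ∈ J)
    {z : (X →ₗ[K] W) × (W →ₗ[K] L)} (hz : z ∈ J) : (0, z.2) ∈ J :=
  hdeg _ (z.1, 0) fun t ht => mem_of_comp_eq_smul_comp hX hL hJ hz (by simp [ht]) (by simp) ht
    (by simp [LinearMap.comp_smul])

theorem mem_of_comp_eq_zero_of_comp_ne_zero (hX : finrank K X = 1) (hL : finrank K L = 1)
    (hJ : IsLeviInvariant J) (hdeg : ∀ p q, (∀ t : K, t ≠ 0 → p + t • q ∈ J) → p ∈ J)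
    {z₀ z : (X →ₗ[K] W) × (W →ₗ[K] L)} (hz₀ : z₀ ∈ J) (h₀ : z₀.2 ∘ₗ z₀.1 ≠ 0) (hz1 : z.1 ≠ 0)
    (hz : z.2 ∘ₗ z.1 = 0) : z ∈ J := by
  have hz₀1 : z₀.1 ≠ 0 := fun h => h₀ (by simp [h])
  have hz₀2 : z₀.2 ≠ 0 := fun h => h₀ (by simp [h])
  obtain ⟨g, hg, -⟩ := exists_linearEquiv_comp_eq_and_comp_eq hX hL (η := (0 : W →ₗ[K] L))
    (η' := 0) (iff_of_false hz1 hz₀1) Iff.rfl rfl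
  refine hdeg z (0, z₀.2 ∘ₗ g.toLinearMap) fun t ht => ?_
  have hcomp : (z.2 + t • (z₀.2 ∘ₗ g.toLinearMap)) ∘ₗ z.1 = t • (z₀.2 ∘ₗ z₀.1) := by
    rw [LinearMap.add_comp, hz, LinearMap.smul_comp, LinearMap.comp_assoc, hg, zero_add]
  have hne : z.2 + t • (z₀.2 ∘ₗ g.toLinearMap) ≠ 0 := fun h => by
    rw [h, LinearMap.zero_comp] at hcomp
    exact smul_ne_zero ht h₀ hcomp.symm
  exact mem_of_comp_eq_smul_comp hX hL hJ hz₀ (iff_of_false hz₀1 (by simpa using hz1))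
    (iff_of_false hz₀2 (by simpa using hne)) ht (by simpa using hcomp)

theorem mem_of_comp_eq_zero (hX : finrank K X = 1) (hL : finrank K L = 1)
    (hJ : IsLeviInvariant J) (hdeg : ∀ p q, (∀ t : K, t ≠ 0 → p + t • q ∈ J) → p ∈ J)
    {z₀ z : (X →ₗ[K] W) × (W →ₗ[K] L)} (hz₀ : z₀ ∈ J) (h1 : z₀.1 ≠ 0) (h2 : z₀.2 ≠ 0)
    (hz : z.2 ∘ₗ z.1 = 0) : z ∈ J := by
  have hsnd := mk_zero_snd_mem_of_mem hX hL hJ hdeg hz₀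
  rcases eq_or_ne z.1 0 with hz1 | hz1
  · rcases eq_or_ne z.2 0 with hz2 | hz2
    · exact (Prod.ext hz1 hz2 : z = (0, 0)) ▸ mk_fst_zero_mem_of_mem hX hL hJ hdeg hsnd
    · exact mem_of_comp_eq_smul_comp hX hL hJ hsnd (iff_of_true rfl hz1) (iff_of_false h2 hz2)
        one_ne_zero (by simp [hz1])
  by_cases h₀ : z₀.2 ∘ₗ z₀.1 = 0
  · rcases eq_or_ne z.2 0 with hz2 | hz2
    · exact mem_of_comp_eq_smul_comp hX hL hJ (mk_fst_zero_mem_of_mem hX hL hJ hdeg hz₀)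
        (iff_of_false h1 hz1) (iff_of_true rfl hz2) one_ne_zero (by simp [hz2])
    · exact mem_of_comp_eq_smul_comp hX hL hJ hz₀ (iff_of_false h1 hz1) (iff_of_false h2 hz2)
        one_ne_zero (by simp [hz, h₀])
  · exact mem_of_comp_eq_zero_of_comp_ne_zero hX hL hJ hdeg hz₀ h₀ hz1 hz

end Cone

theorem exists_linearEquiv_lift_flag {K V : Type*} [Field K] [AddCommGroup V] [Module K V]
    {X H : Submodule K V} (hXH : X ≤ H)
    (g : (H ⧸ X.comap H.subtype) ≃ₗ[K] (H ⧸ X.comap H.subtype)) {b : K} (hb : b ≠ 0) :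
    ∃ (e : V ≃ₗ[K] V) (eH : H ≃ₗ[K] H), (∀ x : X, (x : V) = e x) ∧
      (∀ h : H, (eH h : V) = e h) ∧
      (∀ h : H, g ((X.comap H.subtype).mkQ h) = (X.comap H.subtype).mkQ (eH h)) ∧
      ∀ v : V, LinearEquiv.smulOfNeZero K (V ⧸ H) b hb (H.mkQ v) = H.mkQ (e v) := by
  obtain ⟨eH, heH, hg⟩ := exists_linearEquiv_restrict_mkQ _ _ (LinearEquiv.refl K _) g
  obtain ⟨e, he, hb⟩ := exists_linearEquiv_restrict_mkQ H H eH (.smulOfNeZero K _ b hb)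
  refine ⟨e, eH, fun x => ?_, he, hg, hb⟩
  calc (x : V) = eH ⟨x, hXH x.2⟩ := congrArg Subtype.val (heH ⟨⟨x, hXH x.2⟩, x.2⟩)
    _ = e x := he _

theorem stmt10_general {V : Type*} [AddCommGroup V] [Module ℂ V] [FiniteDimensional ℂ V]
    (X H : Submodule ℂ V) (hXH : X ≤ H)
    (hX : Module.finrank ℂ X = 1)
    (hH : Module.finrank ℂ H + 1 = Module.finrank ℂ V)
    (J : Set ((X →ₗ[ℂ] (H ⧸ X.comap H.subtype)) ×
      ((H ⧸ X.comap H.subtype) →ₗ[ℂ] (V ⧸ H))))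
    -- `J` is closed (in any linear coordinate system)
    (hclosed : ∀ (n : ℕ)
      (φ : ((X →ₗ[ℂ] (H ⧸ X.comap H.subtype)) ×
        ((H ⧸ X.comap H.subtype) →ₗ[ℂ] (V ⧸ H))) ≃ₗ[ℂ] (Fin n → ℂ)),
      IsClosed (φ '' J))
    -- `J` is `Q`-invariant
    (hinv : ∀ (e : V ≃ₗ[ℂ] V) (eX : X ≃ₗ[ℂ] X) (eH : H ≃ₗ[ℂ] H)
      (eHX : (H ⧸ X.comap H.subtype) ≃ₗ[ℂ] (H ⧸ X.comap H.subtype))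
      (eVH : (V ⧸ H) ≃ₗ[ℂ] (V ⧸ H)),
      (∀ x : X, (eX x : V) = e (x : V)) →
      (∀ h : H, (eH h : V) = e (h : V)) →
      (∀ h : H, eHX ((X.comap H.subtype).mkQ h) = (X.comap H.subtype).mkQ (eH h)) →
      (∀ v : V, eVH (H.mkQ v) = H.mkQ (e v)) →
      ∀ z ∈ J, (eHX.toLinearMap ∘ₗ z.1 ∘ₗ eX.symm.toLinearMap,
        eVH.toLinearMap ∘ₗ z.2 ∘ₗ eHX.symm.toLinearMap) ∈ J)
    -- `J` is not contained in `ℙ Hom(X,H/X) ∪ ℙ Hom(H/X,V/H)`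
    (hnot : ∃ z ∈ J, z.1 ≠ 0 ∧ z.2 ≠ 0) :
    ∀ z : (X →ₗ[ℂ] (H ⧸ X.comap H.subtype)) × ((H ⧸ X.comap H.subtype) →ₗ[ℂ] (V ⧸ H)),
      z.2 ∘ₗ z.1 = 0 → z ∈ J := by
  intro z hz
  obtain ⟨z₀, hz₀, h1, h2⟩ := hnot
  have hL : finrank ℂ (V ⧸ H) = 1 := by
    have := H.finrank_quotient_add_finrank
    omega
  have hlevi : IsLeviInvariant J := fun g b hb z hz => by
    obtain ⟨e, eH, he₁, he₂, he₃, he₄⟩ := exists_linearEquiv_lift_flag hXH g hb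
    exact hinv e (.refl ℂ X) eH g _ he₁ he₂ he₃ he₄ z hz
  have hdeg : ∀ p q, (∀ t : ℂ, t ≠ 0 → p + t • q ∈ J) → p ∈ J := fun _ _ =>
    mem_of_forall_add_smul_mem (finBasis ℂ _).equivFun (hclosed _ _)
  exact mem_of_comp_eq_zero hX hL hlevi hdeg hz₀ h1 h2 hz

/-- any `Q`-invariant closed cone (i.e. closed subvariety of `ℙ(D¹)`)
`𝒥 ⊂ D¹ = Hom(X, H/X) ⊕ Hom(H/X, V/H)` which is not contained in
`Hom(X, H/X) ∪ Hom(H/X, V/H)` contains `ℐ = {ζ ⊕ η : η ∘ ζ = 0}`.  Here `Q`-invariance is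
invariance under every conjugation by an element of `GL(V)` preserving the flag `X ⊂ H`. -/
theorem stmt10 {V : Type*} [AddCommGroup V] [Module ℂ V] [FiniteDimensional ℂ V]
    (X H : Submodule ℂ V) (hXH : X ≤ H)
    (hX : Module.finrank ℂ X = 1)
    (hH : Module.finrank ℂ H + 1 = Module.finrank ℂ V)
    (hV : 3 ≤ Module.finrank ℂ V)
    (J : Set ((X →ₗ[ℂ] (H ⧸ X.comap H.subtype)) ×
      ((H ⧸ X.comap H.subtype) →ₗ[ℂ] (V ⧸ H))))
    -- `J` is a cone (it is the affine cone over a subset of `ℙ(D¹)`)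
    (hcone : ∀ c : ℂ, ∀ z ∈ J, (c • z.1, c • z.2) ∈ J)
    -- `J` is closed (in any linear coordinate system)
    (hclosed : ∀ (n : ℕ)
      (φ : ((X →ₗ[ℂ] (H ⧸ X.comap H.subtype)) ×
        ((H ⧸ X.comap H.subtype) →ₗ[ℂ] (V ⧸ H))) ≃ₗ[ℂ] (Fin n → ℂ)),
      IsClosed (φ '' J))
    -- `J` is `Q`-invariant
    (hinv : ∀ (e : V ≃ₗ[ℂ] V) (eX : X ≃ₗ[ℂ] X) (eH : H ≃ₗ[ℂ] H)
      (eHX : (H ⧸ X.comap H.subtype) ≃ₗ[ℂ] (H ⧸ X.comap H.subtype))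
      (eVH : (V ⧸ H) ≃ₗ[ℂ] (V ⧸ H)),
      (∀ x : X, (eX x : V) = e (x : V)) →
      (∀ h : H, (eH h : V) = e (h : V)) →
      (∀ h : H, eHX ((X.comap H.subtype).mkQ h) = (X.comap H.subtype).mkQ (eH h)) →
      (∀ v : V, eVH (H.mkQ v) = H.mkQ (e v)) →
      ∀ z ∈ J, (eHX.toLinearMap ∘ₗ z.1 ∘ₗ eX.symm.toLinearMap,
        eVH.toLinearMap ∘ₗ z.2 ∘ₗ eHX.symm.toLinearMap) ∈ J)
    -- `J` is not contained in `ℙ Hom(X,H/X) ∪ ℙ Hom(H/X,V/H)`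
    (hnot : ∃ z ∈ J, z.1 ≠ 0 ∧ z.2 ≠ 0) :
    ∀ z : (X →ₗ[ℂ] (H ⧸ X.comap H.subtype)) × ((H ⧸ X.comap H.subtype) →ₗ[ℂ] (V ⧸ H)),
      z.2 ∘ₗ z.1 = 0 → z ∈ J :=
  stmt10_general X H hXH hX hH J hclosed hinv hnot
end
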